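/- arXiv:1705.01652 — 7 statements merged into one kernel-verified Lean document; each statement's English description precedes it below -/
import Mathlib

section
/- Let D ⊆ ℤ³ be a curtain, i.e. (C1) for every k ∈ ℤ the intersection D ∩ (ℤ²×{k}) is a bi-infinite path whose steps are all e₁=(1,0,0) or -e₂=(0,-1,0) with no three consecutive steps in the same direction, and (C2) for all x ∈ D, either x+(0,0,-1) ∈ D or x+(1,1,-1) ∈ D. Then for every k, D intersects the diagonal line {(t,t,k) : t ∈ ℤ} in exactly one site. -/
/-!
Both allowed steps `e₁` and `-e₂` raise `x - y` by exactly one, so along the layer path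
`t ↦ f t` the quantity `x - y` equals `c + t` for a constant `c`. The diagonal `x = y` is
therefore met exactly at parameter `t = -c`.
-/

/-- Sites of the cubic lattice `ℤ³`. -/
abbrev Site := ℤ × ℤ × ℤ

/-- (C1) for layer `k`: the intersection of `D` with the layer `ℤ² × {k}` is a
bi-infinite path whose steps are all `e₁ = (1,0,0)` or `-e₂ = (0,-1,0)`,
with no three consecutive steps in the same direction. -/
def LayerPath (D : Set Site) (k : ℤ) : Prop :=
  ∃ f : ℤ → Site,
    (∀ t : ℤ, (f t).2.2 = k) ∧
    Function.Injective f ∧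
    (∀ x : Site, (x ∈ D ∧ x.2.2 = k) ↔ ∃ t : ℤ, f t = x) ∧
    (∀ t : ℤ, f (t + 1) - f t = ((1 : ℤ), (0 : ℤ), (0 : ℤ)) ∨
              f (t + 1) - f t = ((0 : ℤ), (-1 : ℤ), (0 : ℤ))) ∧
    (∀ t : ℤ, ¬ (f (t + 1) - f t = f (t + 2) - f (t + 1) ∧
                 f (t + 2) - f (t + 1) = f (t + 3) - f (t + 2)))

/-- A curtain: (C1) in every layer, together with (C2). -/
def IsCurtain (D : Set Site) : Prop :=
  (∀ k : ℤ, LayerPath D k) ∧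
  (∀ x ∈ D, x + ((0 : ℤ), (0 : ℤ), (-1 : ℤ)) ∈ D ∨ x + ((1 : ℤ), (1 : ℤ), (-1 : ℤ)) ∈ D)

def diagonalOffset (x : Site) : ℤ := x.1 - x.2.1

lemma diagonalOffset_eq_add_one_of_step {x y : Site}
    (h : y - x = ((1 : ℤ), (0 : ℤ), (0 : ℤ)) ∨ y - x = ((0 : ℤ), (-1 : ℤ), (0 : ℤ))) :
    diagonalOffset y = diagonalOffset x + 1 := by
  unfold diagonalOffset
  rcases h with h | h <;>
  · simp only [Prod.ext_iff, Prod.fst_sub, Prod.snd_sub] at h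
    omega

lemma Int.eq_map_zero_add_of_map_add_one {g : ℤ → ℤ} (hg : ∀ t, g (t + 1) = g t + 1) (t : ℤ) :
    g t = g 0 + t := by
  induction t using Int.induction_on with
  | zero => simp
  | succ n ih => rw [hg, ih]; ring
  | pred n ih =>
    have := hg (-n - 1)
    rw [sub_add_cancel] at this
    omega

theorem LayerPath.existsUnique_diagonal {D : Set Site} {k : ℤ} (hD : LayerPath D k) :
    ∃! s : ℤ, ((s, s, k) : Site) ∈ D := by
  obtain ⟨f, hlayer, -, hmem, hstep, -⟩ := hD
  have hoffset (t : ℤ) : diagonalOffset (f t) = diagonalOffset (f 0) + t :=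
    Int.eq_map_zero_add_of_map_add_one (g := fun t => diagonalOffset (f t))
      (fun t => diagonalOffset_eq_add_one_of_step (hstep t)) t
  have mem_diagonal_iff (s : ℤ) : ((s, s, k) : Site) ∈ D ↔ ∃ t, f t = (s, s, k) := by
    simpa using hmem (s, s, k)
  obtain ⟨t₀, ht₀⟩ : ∃ t₀, diagonalOffset (f t₀) = 0 :=
    ⟨-diagonalOffset (f 0), by rw [hoffset]; ring⟩
  have hdiag : f t₀ = ((f t₀).1, (f t₀).1, k) := by
    rw [diagonalOffset, sub_eq_zero] at ht₀
    ext <;> simp [ht₀, hlayer]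
  refine ⟨(f t₀).1, (mem_diagonal_iff _).2 ⟨t₀, hdiag⟩, fun s hs => ?_⟩
  obtain ⟨t, ht⟩ := (mem_diagonal_iff s).1 hs
  have hzero : diagonalOffset (f t) = 0 := by simp [ht, diagonalOffset]
  have htt₀ : t = t₀ := by linarith [hoffset t, hoffset t₀]
  rw [← htt₀, ht]

/-- A curtain intersects each diagonal line `{(t,t,k) : t ∈ ℤ}` in exactly one site. -/
theorem curtain_meets_diagonal_uniquely (D : Set Site) (hD : IsCurtain D) (k : ℤ) :
    ∃! t : ℤ, ((t, t, k) : Site) ∈ D :=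
  (hD.1 k).existsUnique_diagonal
end

section
/- With the setup of permissible paths as above (taxed step (1,1,0) landing on a closed site, free steps in {(-1,0,0),(0,-1,0),(0,0,-1),(-2,1,0),(1,-2,0),(-1,-1,1)}), let A be the set reachable from an arbitrary set H and D := {x ∉ A : x-(1,1,0) ∈ A}. Then D satisfies condition (C2): for all x ∈ D, either x+(0,0,-1) ∈ D or x+(1,1,-1) ∈ D. -/
/-- The free steps. -/
def FreeStep (v : Site) : Prop :=
  v = ((-1 : ℤ), (0 : ℤ), (0 : ℤ)) ∨ v = ((0 : ℤ), (-1 : ℤ), (0 : ℤ)) ∨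
  v = ((0 : ℤ), (0 : ℤ), (-1 : ℤ)) ∨ v = ((-2 : ℤ), (1 : ℤ), (0 : ℤ)) ∨
  v = ((1 : ℤ), (-2 : ℤ), (0 : ℤ)) ∨ v = ((-1 : ℤ), (-1 : ℤ), (1 : ℤ))

/-- `Reach C H x` : the site `x` is reachable from the set `H` by a permissible path,
where a step is either free, or is the taxed step `(1,1,0)` landing on a site of the
closed set `C`. -/
inductive Reach (C H : Set Site) : Site → Prop
  | base {x : Site} : x ∈ H → Reach C H x
  | free {x y : Site} : Reach C H x → FreeStep (y - x) → Reach C H y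
  | taxed {x y : Site} : Reach C H x → y ∈ C → y - x = ((1 : ℤ), (1 : ℤ), (0 : ℤ)) →
      Reach C H y

/-- The outer boundary `D = {x ∉ A : x - (1,1,0) ∈ A}` of the reachable set `A`. -/
def Dset (C H : Set Site) : Set Site :=
  {x | ¬ Reach C H x ∧ Reach C H (x - ((1 : ℤ), (1 : ℤ), (0 : ℤ)))}


theorem Reach.add_freeStep {C H : Set Site} {x v : Site} (hx : Reach C H x) (hv : FreeStep v) :
    Reach C H (x + v) :=
  hx.free (by rwa [add_sub_cancel_left])

/-- `D` satisfies property (C2) of a curtain: for every `x ∈ D`,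
either `x + (0,0,-1) ∈ D` or `x + (1,1,-1) ∈ D`. -/
theorem Dset_C2 (C H : Set Site) :
    ∀ x ∈ Dset C H,
      x + ((0 : ℤ), (0 : ℤ), (-1 : ℤ)) ∈ Dset C H ∨
      x + ((1 : ℤ), (1 : ℤ), (-1 : ℤ)) ∈ Dset C H := by
  rintro x ⟨hxA, hxm⟩
  by_cases hbelow : Reach C H (x + ((0 : ℤ), (0 : ℤ), (-1 : ℤ)))
  · -- the free step `(-1,-1,1)` leads from `x + (1,1,-1)` back to `x ∉ A`
    right
    have hdiag : x + ((1 : ℤ), (1 : ℤ), (-1 : ℤ)) - ((1 : ℤ), (1 : ℤ), (0 : ℤ)) =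
        x + ((0 : ℤ), (0 : ℤ), (-1 : ℤ)) := by
      ext <;> simp
    refine ⟨fun hup => hxA ?_, hdiag ▸ hbelow⟩
    have hback : x + ((1 : ℤ), (1 : ℤ), (-1 : ℤ)) + ((-1 : ℤ), (-1 : ℤ), (1 : ℤ)) = x := by
      ext <;> simp
    exact hback ▸ hup.add_freeStep (by simp [FreeStep])
  · left
    have hshift : x - ((1 : ℤ), (1 : ℤ), (0 : ℤ)) + ((0 : ℤ), (0 : ℤ), (-1 : ℤ)) =
        x + ((0 : ℤ), (0 : ℤ), (-1 : ℤ)) - ((1 : ℤ), (1 : ℤ), (0 : ℤ)) := by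
      abel
    exact ⟨hbelow, hshift ▸ hxm.add_freeStep (by simp [FreeStep])⟩
end

section
/- With the same setup (A the set reachable by permissible paths from H, D := {x ∉ A : x-(1,1,0) ∈ A}), if 0 ∈ D then exactly one of (1,0,0) ∈ D or (0,-1,0) ∈ D holds, and exactly one of (-1,0,0) ∈ D or (0,1,0) ∈ D holds. -/
/-!
The free steps `(-1,0,0)` and `(0,-1,0)` make `A` closed under decreasing either of the first two
coordinates. Hence for `x ∈ D` each neighbour `x ± (1,0,0)`, `x ± (0,1,0)` satisfies one of the
two conditions defining `D` automatically, and the other one says `x - (0,1,0) ∈ A` for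
`x + (1,0,0)`, its negation for `x - (0,1,0)`, `x - (1,0,0) ∈ A` for `x + (0,1,0)` and its
negation for `x - (1,0,0)`.
-/

namespace Reach

variable {C H : Set Site} {x : Site}

theorem sub_e₁ (h : Reach C H x) : Reach C H (x - (1, 0, 0)) :=
  h.free (Or.inl (by simp))

theorem sub_e₂ (h : Reach C H x) : Reach C H (x - (0, 1, 0)) :=
  h.free (Or.inr (Or.inl (by simp)))

end Reach

namespace Dset

variable {C H : Set Site} {x : Site}

theorem add_e₁_mem_iff (hx : x ∈ Dset C H) :
    x + (1, 0, 0) ∈ Dset C H ↔ Reach C H (x - (0, 1, 0)) := by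
  have hout : ¬ Reach C H (x + (1, 0, 0)) := fun h => hx.1 (by simpa using h.sub_e₁)
  have hshift : x + (1, 0, 0) - (1, 1, 0) = x - (0, 1, 0) := by ext <;> simp
  simp [Dset, hout, hshift]

theorem sub_e₂_mem_iff (hx : x ∈ Dset C H) :
    x - (0, 1, 0) ∈ Dset C H ↔ ¬ Reach C H (x - (0, 1, 0)) := by
  have hin : Reach C H (x - (0, 1, 0) - (1, 1, 0)) := sub_right_comm x _ _ ▸ hx.2.sub_e₂
  simp [Dset, hin]

theorem sub_e₁_mem_iff (hx : x ∈ Dset C H) :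
    x - (1, 0, 0) ∈ Dset C H ↔ ¬ Reach C H (x - (1, 0, 0)) := by
  have hin : Reach C H (x - (1, 0, 0) - (1, 1, 0)) := sub_right_comm x _ _ ▸ hx.2.sub_e₁
  simp [Dset, hin]

theorem add_e₂_mem_iff (hx : x ∈ Dset C H) :
    x + (0, 1, 0) ∈ Dset C H ↔ Reach C H (x - (1, 0, 0)) := by
  have hout : ¬ Reach C H (x + (0, 1, 0)) := fun h => hx.1 (by simpa using h.sub_e₂)
  have hshift : x + (0, 1, 0) - (1, 1, 0) = x - (1, 0, 0) := by ext <;> simp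
  simp [Dset, hout, hshift]

theorem xor_add_e₁_sub_e₂ (hx : x ∈ Dset C H) :
    Xor (x + (1, 0, 0) ∈ Dset C H) (x - (0, 1, 0) ∈ Dset C H) := by
  rw [add_e₁_mem_iff hx, sub_e₂_mem_iff hx, xor_not_right]

theorem xor_sub_e₁_add_e₂ (hx : x ∈ Dset C H) :
    Xor (x - (1, 0, 0) ∈ Dset C H) (x + (0, 1, 0) ∈ Dset C H) := by
  rw [sub_e₁_mem_iff hx, add_e₂_mem_iff hx, xor_not_left]

end Dset

/-- If `0 ∈ D` then exactly one of `(1,0,0) ∈ D`, `(0,-1,0) ∈ D` holds, and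
exactly one of `(-1,0,0) ∈ D`, `(0,1,0) ∈ D` holds. -/
theorem Dset_neighbors (C H : Set Site)
    (h0 : (((0 : ℤ), (0 : ℤ), (0 : ℤ)) : Site) ∈ Dset C H) :
    Xor' ((((1 : ℤ), (0 : ℤ), (0 : ℤ)) : Site) ∈ Dset C H)
         ((((0 : ℤ), (-1 : ℤ), (0 : ℤ)) : Site) ∈ Dset C H) ∧
    Xor' ((((-1 : ℤ), (0 : ℤ), (0 : ℤ)) : Site) ∈ Dset C H)
         ((((0 : ℤ), (1 : ℤ), (0 : ℤ)) : Site) ∈ Dset C H) :=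
  ⟨Dset.xor_add_e₁_sub_e₂ h0, Dset.xor_sub_e₁_add_e₂ h0⟩
end

section
/- With the same setup, if 0 ∈ D then (0,-3,0) ∈ A and (2,-1,0) ∉ A; consequently (0,-3,0) ∉ D and (3,0,0) ∉ D. (This rules out three consecutive steps in the same direction in the layer path of D.) -/
/-! From `x ∈ D` the free step `(1,-2,0)` leads from `x - (1,1,0) ∈ A` to `x + (0,-3,0)`,
so that site lies in `A`; and the free step `(-2,1,0)` leads from `x + (2,-1,0)` to
`x ∉ A`, so that site does not. -/

namespace Reach

variable {C H : Set Site} {x : Site}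

theorem add_of_freeStep (hx : Reach C H x) {v : Site} (hv : FreeStep v) :
    Reach C H (x + v) :=
  hx.free (by rwa [add_sub_cancel_left])

theorem not_mem_Dset (hx : Reach C H x) : x ∉ Dset C H :=
  fun hD => hD.1 hx

end Reach

section Dset

variable {C H : Set Site} {x : Site}

theorem reach_add_of_mem_Dset (hx : x ∈ Dset C H) :
    Reach C H (x + ((0 : ℤ), (-3 : ℤ), (0 : ℤ))) := by
  have hstep : FreeStep ((1 : ℤ), (-2 : ℤ), (0 : ℤ)) := by simp [FreeStep]
  convert hx.2.add_of_freeStep hstep using 1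
  ext <;> simp only [Prod.fst_add, Prod.snd_add, Prod.fst_sub, Prod.snd_sub] <;> ring

theorem not_reach_add_of_mem_Dset (hx : x ∈ Dset C H) :
    ¬ Reach C H (x + ((2 : ℤ), (-1 : ℤ), (0 : ℤ))) := by
  have hstep : FreeStep ((-2 : ℤ), (1 : ℤ), (0 : ℤ)) := by simp [FreeStep]
  intro hreach
  apply hx.1
  convert hreach.add_of_freeStep hstep using 1
  ext <;> simp

end Dset

/-- If `0 ∈ D` then `(0,-3,0) ∈ A` and `(2,-1,0) ∉ A`; consequently
`(0,-3,0) ∉ D` and `(3,0,0) ∉ D`. -/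
theorem Dset_no_three_consecutive (C H : Set Site)
    (h0 : (((0 : ℤ), (0 : ℤ), (0 : ℤ)) : Site) ∈ Dset C H) :
    Reach C H (((0 : ℤ), (-3 : ℤ), (0 : ℤ)) : Site) ∧
    ¬ Reach C H (((2 : ℤ), (-1 : ℤ), (0 : ℤ)) : Site) ∧
    (((0 : ℤ), (-3 : ℤ), (0 : ℤ)) : Site) ∉ Dset C H ∧
    (((3 : ℤ), (0 : ℤ), (0 : ℤ)) : Site) ∉ Dset C H := by
  have hA : Reach C H (((0 : ℤ), (-3 : ℤ), (0 : ℤ)) : Site) := by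
    simpa using reach_add_of_mem_Dset h0
  have hnA : ¬ Reach C H (((2 : ℤ), (-1 : ℤ), (0 : ℤ)) : Site) := by
    simpa using not_reach_add_of_mem_Dset h0
  refine ⟨hA, hnA, hA.not_mem_Dset, fun hD => hnA ?_⟩
  convert hD.2 using 1
  decide
end

section
/- Let each site of ℤ³ be independently closed with probability q < 8⁻³. Then the probability that the site (k,k,0) is reachable from the half-space H = {x : x₁+x₂+x₃ ≤ 0} by a permissible path is at most 8·(7q)^k for every k ≥ 1. -/
open MeasureTheory

/-- The half-space `H = {x : x₁ + x₂ + x₃ ≤ 0}`. -/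
def Hhalf : Set Site := {x | x.1 + x.2.1 + x.2.2 ≤ 0}

/-!
Read a permissible path backwards from its endpoint as a list of steps. Cutting out loops, every
reachable site is the endpoint of a self-avoiding path, so its taxed steps land on distinct closed
sites. The level `x₁ + x₂ + x₃` drops by one along a free step and rises by two along a taxed one,
so a path with `n` steps climbing from `H` to level `2k` has `T ≥ (2k + n)/3` taxed steps, and
`n ≥ k`. With `ρ = q^{1/3} < 1/8` a given step list is realised with probability at most
`q^T ≤ ρ^{2k+n}`, and the union bound over the `7ⁿ` step lists of each length gives
`∑_{n ≥ k} 7ⁿ ρ^{2k+n} = (7q)^k / (1 - 7ρ) ≤ 8 (7q)^k`.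
-/

open scoped ENNReal

lemma ENNReal.tsum_list_length {α : Type*} [Fintype α] (f : ℕ → ℝ≥0∞) :
    ∑' l : List α, f l.length = ∑' n, (Fintype.card α : ℝ≥0∞) ^ n * f n := by
  rw [← (List.equivSigmaTuple (α := α)).symm.tsum_eq, ENNReal.tsum_sigma']
  congr 1; ext n
  simp [List.equivSigmaTuple]

lemma ENNReal.tsum_geometric_tail (a : ℝ≥0∞) (k : ℕ) :
    ∑' n, (if k ≤ n then a ^ n else 0) = a ^ k * (1 - a)⁻¹ := by
  rw [← ENNReal.summable.sum_add_tsum_nat_add' (k := k), Finset.sum_eq_zero fun i hi => if_neg (by simp at hi; omega), zero_add]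
  simp only [le_add_iff_nonneg_left, zero_le, if_true, pow_add, ENNReal.tsum_mul_left,
    ENNReal.tsum_geometric, mul_comm]

lemma ENNReal.exists_pow_eq_lt {n : ℕ} (hn : n ≠ 0) {x c : ℝ≥0∞} (hx : x < c ^ n) :
    ∃ ρ, ρ ^ n = x ∧ ρ < c := by
  refine ⟨x ^ (n⁻¹ : ℝ), ENNReal.rpow_inv_natCast_pow hn x, ?_⟩
  by_contra! hc
  have hcx := pow_le_pow_left₀ zero_le hc n
  rw [ENNReal.rpow_inv_natCast_pow hn] at hcx
  exact hcx.not_gt hx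

lemma ENNReal.inv_one_sub_seven_mul_le {ρ : ℝ≥0∞} (hρ : ρ ≤ 8⁻¹) : (1 - 7 * ρ)⁻¹ ≤ 8 := by
  have h : (8 : ℝ≥0∞)⁻¹ ≤ 1 - 7 * ρ := by
    calc (8 : ℝ≥0∞)⁻¹ = 1 - 7 * 8⁻¹ := by
          refine ENNReal.eq_sub_of_add_eq (by finiteness) ?_
          rw [← one_add_mul, show (1 + 7 : ℝ≥0∞) = 8 by norm_num,
            ENNReal.mul_inv_cancel] <;> norm_num
      _ ≤ 1 - 7 * ρ := by gcongr
  simpa using ENNReal.inv_le_inv.mpr h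

namespace PermissiblePath

def taxedStep : Site := (1, 1, 0)

def level (x : Site) : ℤ := x.1 + x.2.1 + x.2.2

lemma level_sub (x y : Site) : level (x - y) = level x - level y := by
  simp only [level, Prod.fst_sub, Prod.snd_sub]; ring

lemma FreeStep.ne_taxedStep {v : Site} (h : FreeStep v) : v ≠ taxedStep := by
  rcases h with rfl | rfl | rfl | rfl | rfl | rfl <;> decide

lemma FreeStep.level_eq {v : Site} (h : FreeStep v) : level v = -1 := by
  rcases h with rfl | rfl | rfl | rfl | rfl | rfl <;> rfl

/-- A path is recorded backwards from its endpoint `y` as its list of steps `v :: s`: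
the site before `y` is `y - v`, and a taxed step must land on a closed site. -/
def IsPermissible (C : Set Site) : Site → List Site → Prop
  | _, [] => True
  | y, v :: s => (FreeStep v ∨ v = taxedStep ∧ y ∈ C) ∧ IsPermissible C (y - v) s

def sites : Site → List Site → List Site
  | y, [] => [y]
  | y, v :: s => y :: sites (y - v) s

def taxedSites : Site → List Site → List Site
  | _, [] => []
  | y, v :: s => if v = taxedStep then y :: taxedSites (y - v) s else taxedSites (y - v) s

variable {C H : Set Site}

lemma IsPermissible.exists_suffix_of_mem_sites {x y : Site} {s : List Site}
    (hs : IsPermissible C x s) (hy : y ∈ sites x s) :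
    ∃ t, IsPermissible C y t ∧ y - t.sum = x - s.sum ∧ sites y t <:+ sites x s := by
  induction s generalizing x with
  | nil =>
    obtain rfl : y = x := by simpa [sites] using hy
    exact ⟨[], trivial, rfl, List.suffix_refl _⟩
  | cons v s ih =>
    rcases List.mem_cons.mp hy with rfl | hy
    · exact ⟨v :: s, hs, rfl, List.suffix_refl _⟩
    · obtain ⟨t, ht, hstart, hsuffix⟩ := ih hs.2 hy
      refine ⟨t, ht, ?_, hsuffix.trans (List.suffix_cons _ _)⟩
      rw [hstart, List.sum_cons, sub_sub]

def IsSelfAvoidingPath (C H : Set Site) (e : Site) (s : List Site) : Prop :=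
  IsPermissible C e s ∧ e - s.sum ∈ H ∧ (sites e s).Nodup

theorem Reach.exists_isSelfAvoidingPath {e : Site} (h : Reach C H e) :
    ∃ s, IsSelfAvoidingPath C H e s := by
  suffices step : ∀ {x y : Site}, (FreeStep (y - x) ∨ y - x = taxedStep ∧ y ∈ C) →
      (∃ s, IsSelfAvoidingPath C H x s) → ∃ s, IsSelfAvoidingPath C H y s by
    induction h with
    | base hx => exact ⟨[], trivial, by simpa using hx, List.nodup_singleton _⟩
    | free _ hstep ih => exact step (Or.inl hstep) ih
    | taxed _ hC hstep ih => exact step (Or.inr ⟨hstep, hC⟩) ih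
  rintro x y hstep ⟨s, hs, hH, hnodup⟩
  by_cases hy : y ∈ sites x s
  -- `y` was visited before: cut off the loop
  · obtain ⟨t, ht, hstart, hsuffix⟩ := hs.exists_suffix_of_mem_sites hy
    exact ⟨t, ht, hstart ▸ hH, hnodup.sublist hsuffix.sublist⟩
  · refine ⟨(y - x) :: s, ⟨?_, by simpa using hs⟩, ?_, ?_⟩
    · exact hstep.imp_right fun h => ⟨h.1, h.2⟩
    · rwa [List.sum_cons, ← sub_sub, sub_sub_cancel]
    · simpa [sites, hy] using hnodup

lemma taxedSites_sublist_sites (y : Site) (s : List Site) :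
    (taxedSites y s).Sublist (sites y s) := by
  induction s generalizing y with
  | nil => simp [taxedSites, sites]
  | cons v s ih =>
    unfold taxedSites sites
    split_ifs
    · exact (ih _).cons_cons y
    · exact (ih _).cons y

lemma IsPermissible.taxedSites_subset {y : Site} {s : List Site} (hs : IsPermissible C y s) :
    ∀ x ∈ taxedSites y s, x ∈ C := by
  induction s generalizing y with
  | nil => simp [taxedSites]
  | cons v s ih =>
    unfold taxedSites
    split_ifs with hv
    · intro x hx
      rcases List.mem_cons.mp hx with rfl | hx
      · exact (hs.1.resolve_left fun hf => FreeStep.ne_taxedStep hf hv).2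
      · exact ih hs.2 x hx
    · exact ih hs.2

lemma length_taxedSites_le (y : Site) (s : List Site) : (taxedSites y s).length ≤ s.length := by
  induction s generalizing y with
  | nil => simp [taxedSites]
  | cons v s ih =>
    unfold taxedSites
    split_ifs <;> simp only [List.length_cons] <;> linarith [ih (y - v)]

/-- Free steps lower the level by one and taxed steps raise it by two. -/
lemma IsPermissible.level_start {y : Site} {s : List Site} (hs : IsPermissible C y s) :
    level (y - s.sum) = level y + s.length - 3 * (taxedSites y s).length := by
  induction s generalizing y with
  | nil => simp [taxedSites]
  | cons v s ih =>
    rw [List.sum_cons, ← sub_sub, ih hs.2, level_sub, taxedSites]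
    rcases hs.1 with hf | ⟨rfl, -⟩
    · rw [if_neg (FreeStep.ne_taxedStep hf), FreeStep.level_eq hf]
      push_cast [List.length_cons]; ring
    · rw [if_pos rfl, show level taxedStep = 2 from rfl]
      push_cast [List.length_cons]; ring

def stepSet : Finset Site :=
  {(-1, 0, 0), (0, -1, 0), (0, 0, -1), (-2, 1, 0), (1, -2, 0), (-1, -1, 1), taxedStep}

lemma card_stepSet : stepSet.card = 7 := by decide

lemma IsPermissible.forall_mem_stepSet {C : Set Site} {y : Site} {s : List Site}
    (hs : IsPermissible C y s) : ∀ v ∈ s, v ∈ stepSet := by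
  induction s generalizing y with
  | nil => simp
  | cons v s ih =>
    intro w hw
    rcases List.mem_cons.mp hw with rfl | hw
    · rcases hs.1 with (rfl | rfl | rfl | rfl | rfl | rfl) | ⟨rfl, -⟩ <;> decide
    · exact ih hs.2 w hw

variable {Ω : Type*} [MeasurableSpace Ω] (μ : Measure Ω) (Cl : Ω → Set Site)

lemma measure_reach_le_tsum (H : Set Site) (e : Site) :
    μ {ω | Reach (Cl ω) H e} ≤
      ∑' s : List stepSet, μ {ω | IsSelfAvoidingPath (Cl ω) H e (s.map (↑))} := by
  refine (measure_mono fun ω hω => ?_).trans (measure_iUnion_le _)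
  obtain ⟨s, hs⟩ := Reach.exists_isSelfAvoidingPath hω
  lift s to List stepSet using hs.1.forall_mem_stepSet
  exact Set.mem_iUnion.mpr ⟨s, hs⟩

lemma level_diag (k : ℕ) : level ((k : ℤ), (k : ℤ), 0) = 2 * k := by
  simp only [level]; ring

lemma measure_isSelfAvoidingPath_le {q : ℝ} (hq0 : 0 ≤ q)
    (hiid : ∀ F : Finset Site, μ {ω | ∀ x ∈ F, x ∈ Cl ω} = ENNReal.ofReal (q ^ F.card))
    {ρ : ℝ≥0∞} (hρq : ρ ^ 3 = ENNReal.ofReal q) (hρ : ρ ≤ 1) (k : ℕ) (s : List Site) :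
    μ {ω | IsSelfAvoidingPath (Cl ω) Hhalf ((k : ℤ), (k : ℤ), 0) s} ≤
      if k ≤ s.length then ρ ^ (2 * k + s.length) else 0 := by
  set e : Site := ((k : ℤ), (k : ℤ), 0)
  rcases Set.eq_empty_or_nonempty {ω | IsSelfAvoidingPath (Cl ω) Hhalf e s} with
    h | ⟨ω, hs, hH, hnodup⟩
  · simp [h]
  set T := (taxedSites e s).length
  have hT : T ≤ s.length := length_taxedSites_le e s
  -- the path climbs from level `≤ 0` up to level `2k`
  have hclimb : 2 * k + s.length ≤ 3 * T := by
    have hstart : level (e - s.sum) ≤ 0 := hH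
    rw [hs.level_start, level_diag] at hstart
    omega
  rw [if_pos (by omega)]
  calc μ {ω | IsSelfAvoidingPath (Cl ω) Hhalf e s}
      ≤ μ {ω | ∀ x ∈ (taxedSites e s).toFinset, x ∈ Cl ω} :=
        measure_mono fun ω hω => by simpa using hω.1.taxedSites_subset
    _ = ρ ^ (3 * T) := by
        rw [hiid, List.toFinset_card_of_nodup (hnodup.sublist (taxedSites_sublist_sites e s)),
          ENNReal.ofReal_pow hq0, pow_mul, hρq]
    _ ≤ ρ ^ (2 * k + s.length) := pow_le_pow_right_of_le_one' hρ hclimb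

end PermissiblePath

open PermissiblePath

theorem prob_reach_diagonal_le_general {Ω : Type*} [MeasurableSpace Ω]
    (μ : Measure Ω)
    (q : ℝ) (hq0 : 0 ≤ q) (hq : q < (8 : ℝ)⁻¹ ^ 3)
    (Cl : Ω → Set Site)
    (hiid : ∀ F : Finset Site,
      μ {ω | ∀ x ∈ F, x ∈ Cl ω} = ENNReal.ofReal (q ^ F.card))
    (k : ℕ) :
    μ {ω | Reach (Cl ω) Hhalf (((k : ℤ), (k : ℤ), (0 : ℤ)) : Site)} ≤
      ENNReal.ofReal (8 * (7 * q) ^ k) := by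
  have hq' : ENNReal.ofReal q < 8⁻¹ ^ 3 := by
    rwa [← ENNReal.ofReal_lt_ofReal_iff (by positivity), ENNReal.ofReal_pow (by norm_num),
      ENNReal.ofReal_inv_of_pos (by norm_num), ENNReal.ofReal_ofNat] at hq
  obtain ⟨ρ, hρq, hρ⟩ := ENNReal.exists_pow_eq_lt three_ne_zero hq'
  have hρ1 : ρ ≤ 1 := hρ.le.trans (by norm_num)
  calc μ {ω | Reach (Cl ω) Hhalf (((k : ℤ), (k : ℤ), (0 : ℤ)) : Site)}
      ≤ ∑' s : List stepSet, if k ≤ s.length then ρ ^ (2 * k + s.length) else 0 :=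
        (measure_reach_le_tsum μ Cl _ _).trans <| ENNReal.tsum_le_tsum fun s => by
          simpa using measure_isSelfAvoidingPath_le μ Cl hq0 hiid hρq hρ1 k (s.map (↑))
    _ = ρ ^ (2 * k) * ∑' n, if k ≤ n then (7 * ρ) ^ n else 0 := by
        rw [ENNReal.tsum_list_length (fun n => if k ≤ n then ρ ^ (2 * k + n) else 0),
          Fintype.card_coe, card_stepSet, ← ENNReal.tsum_mul_left]
        congr 1; ext n
        split_ifs <;> ring
    _ = (7 * ρ ^ 3) ^ k * (1 - 7 * ρ)⁻¹ := by rw [ENNReal.tsum_geometric_tail]; ring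
    _ ≤ (7 * ENNReal.ofReal q) ^ k * 8 := by
        rw [hρq]; gcongr; exact ENNReal.inv_one_sub_seven_mul_le hρ.le
    _ = ENNReal.ofReal (8 * (7 * q) ^ k) := by
        rw [ENNReal.ofReal_mul (by norm_num), ENNReal.ofReal_pow (by positivity),
          ENNReal.ofReal_mul (by norm_num)]
        simp only [ENNReal.ofReal_ofNat]; ring

/-- If each site of `ℤ³` is independently closed with probability `q < 8⁻³`
(formalized by requiring that any finite set of sites is entirely closed with
probability exactly `q` to the cardinality), then the probability that `(k,k,0)` is
reachable from the half-space `H` by a permissible path is at most `8·(7q)^k`,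
for every `k ≥ 1`. -/
theorem prob_reach_diagonal_le {Ω : Type*} [MeasurableSpace Ω]
    (μ : Measure Ω) [IsProbabilityMeasure μ]
    (q : ℝ) (hq0 : 0 ≤ q) (hq : q < (8 : ℝ)⁻¹ ^ 3)
    (Cl : Ω → Set Site)
    (hiid : ∀ F : Finset Site,
      μ {ω | ∀ x ∈ F, x ∈ Cl ω} = ENNReal.ofReal (q ^ F.card))
    (k : ℕ) (hk : 1 ≤ k) :
    μ {ω | Reach (Cl ω) Hhalf (((k : ℤ), (k : ℤ), (0 : ℤ)) : Site)} ≤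
      ENNReal.ofReal (8 * (7 * q) ^ k) :=
  prob_reach_diagonal_le_general μ q hq0 hq Cl hiid k
end

section
/- Cell comparison: fix L ≥ 1, let B = [0,4L)×[0,16L)×[0,32L) and B̂ = [0,4L)×[0,4L)×[0,2L) (intersected with ℤ³). For x ∈ B̂ define cell(x) = (x₁, 4x₂, 16x₃) + {0}×[0,4)×[0,16). Given a configuration on B, define the auxiliary configuration on B̂ by: x is open iff all sites of cell(x) are open, and x is initially occupied iff all sites of cell(x) are initially occupied. Run modified bootstrap percolation with threshold 2 on B̂ from the auxiliary configuration (all sites outside B̂ closed), and on B from the original configuration (all sites outside B closed). If x becomes occupied at some time in the auxiliary dynamics, then every site of cell(x) becomes occupied at some time in the original dynamics. -/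
/-- The standard coordinate vectors of `ℤ³`. -/
def eVec : Fin 3 → Site := ![(1, 0, 0), (0, 1, 0), (0, 0, 1)]

/-- The modified bootstrap rule with threshold 2. -/
def ModRule (occ : Set Site) (x : Site) : Prop :=
  ∃ i j : Fin 3, i ≠ j ∧
    (x - eVec i ∈ occ ∨ x + eVec i ∈ occ) ∧
    (x - eVec j ∈ occ ∨ x + eVec j ∈ occ)

/-- Modified bootstrap dynamics with closed set `C`, initially occupied set `O`. -/
def occSeq (C O : Set Site) : ℕ → Set Site
  | 0 => O
  | t + 1 => occSeq C O t ∪ {x | x ∉ C ∧ ModRule (occSeq C O t) x}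

/-- The brick `B = [0,4L) × [0,16L) × [0,32L)`. -/
def Brick (L : ℕ) : Set Site :=
  {y | 0 ≤ y.1 ∧ y.1 < 4 * L ∧ 0 ≤ y.2.1 ∧ y.2.1 < 16 * L ∧ 0 ≤ y.2.2 ∧ y.2.2 < 32 * L}

/-- The proto-brick `B̂ = [0,4L) × [0,4L) × [0,2L)`. -/
def ProtoBrick (L : ℕ) : Set Site :=
  {x | 0 ≤ x.1 ∧ x.1 < 4 * L ∧ 0 ≤ x.2.1 ∧ x.2.1 < 4 * L ∧ 0 ≤ x.2.2 ∧ x.2.2 < 2 * L}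

/-- `cell(x) = (x₁, 4x₂, 16x₃) + {0} × [0,4) × [0,16)`. -/
def cell (x : Site) : Set Site :=
  {y | y.1 = x.1 ∧ 4 * x.2.1 ≤ y.2.1 ∧ y.2.1 < 4 * x.2.1 + 4 ∧
       16 * x.2.2 ≤ y.2.2 ∧ y.2.2 < 16 * x.2.2 + 16}

/-- In the auxiliary configuration, `x` is closed iff `x ∉ B̂` or some site of
`cell(x)` is closed. -/
def AuxClosed (L : ℕ) (C : Set Site) : Set Site :=
  {x | x ∉ ProtoBrick L ∨ ∃ y ∈ cell x, y ∈ C}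

/-- In the auxiliary configuration, `x` is initially occupied iff `x ∈ B̂` and every
site of `cell(x)` is initially occupied. -/
def AuxOcc (L : ℕ) (O : Set Site) : Set Site :=
  {x | x ∈ ProtoBrick L ∧ ∀ y ∈ cell x, y ∈ O}

/-!
Let `E` be the set of sites that are eventually occupied in the original dynamics; it is closed
under the rule at open sites. By induction on time, every site occupied in the auxiliary dynamics
has its whole cell in `E`. For the induction step, `x` is supported in two distinct directions
`i ≠ j` by neighbouring cells `cell (x + v)`, `cell (x + w)` lying in `E`, with `v = ±eᵢ` and
`w = ±eⱼ`. If some site of the (finite) cell of `x` were not in `E`, take such a site `y`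
maximising `dot (v + w) y`. A unit step `v` from `y` either stays in `cell x`, where it increases
`dot (v + w)` and so lands in `E` by maximality, or enters `cell (x + v) ⊆ E`; likewise for `w`.
So `y` has occupied neighbours in the directions `i` and `j`, and `y ∈ E` after all.
-/

section Dynamics

variable {C O : Set Site}

theorem monotone_occSeq : Monotone (occSeq C O) :=
  monotone_nat_of_le_succ fun _ _ hy => Or.inl hy

theorem ModRule.mono {occ occ' : Set Site} (h : occ ⊆ occ') {x : Site} (hx : ModRule occ x) :
    ModRule occ' x := by
  obtain ⟨i, j, hij, hi, hj⟩ := hx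
  exact ⟨i, j, hij, hi.imp (h ·) (h ·), hj.imp (h ·) (h ·)⟩

theorem ModRule.exists_of_iUnion {S : ℕ → Set Site} (hS : Monotone S) {x : Site}
    (hx : ModRule (⋃ t, S t) x) : ∃ t, ModRule (S t) x := by
  obtain ⟨i, j, hij, hi, hj⟩ := hx
  simp only [Set.mem_iUnion, ← exists_or] at hi hj
  obtain ⟨s, hs⟩ := hi
  obtain ⟨t, ht⟩ := hj
  refine ⟨max s t, i, j, hij, ?_, ?_⟩
  · exact hs.imp (hS (le_max_left s t) ·) (hS (le_max_left s t) ·)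
  · exact ht.imp (hS (le_max_right s t) ·) (hS (le_max_right s t) ·)

def eventuallyOcc (C O : Set Site) : Set Site := ⋃ t, occSeq C O t

theorem occSeq_subset_eventuallyOcc (t : ℕ) : occSeq C O t ⊆ eventuallyOcc C O :=
  Set.subset_iUnion (occSeq C O) t

theorem mem_eventuallyOcc_of_modRule {y : Site} (hy : y ∉ C)
    (h : ModRule (eventuallyOcc C O) y) : y ∈ eventuallyOcc C O := by
  obtain ⟨t, ht⟩ := h.exists_of_iUnion monotone_occSeq
  exact occSeq_subset_eventuallyOcc (t + 1) (Or.inr ⟨hy, ht⟩)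

end Dynamics

section Geometry

def IsAxisStep (i : Fin 3) (v : Site) : Prop := v = eVec i ∨ v = -eVec i

theorem modRule_clause_iff (i : Fin 3) (A : Set Site) (x : Site) :
    (x - eVec i ∈ A ∨ x + eVec i ∈ A) ↔ ∃ v, IsAxisStep i v ∧ x + v ∈ A := by
  simp only [IsAxisStep, sub_eq_add_neg, or_and_right, exists_or, exists_eq_left]
  exact or_comm

def dot (a b : Site) : ℤ := a.1 * b.1 + a.2.1 * b.2.1 + a.2.2 * b.2.2

theorem dot_add_axisStep {i j : Fin 3} (hij : i ≠ j) {v w : Site} (hv : IsAxisStep i v)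
    (hw : IsAxisStep j w) (y : Site) : dot (v + w) (y + v) = dot (v + w) y + 1 := by
  rcases hv with rfl | rfl <;> rcases hw with rfl | rfl <;> fin_cases i <;> fin_cases j <;>
    first | exact absurd rfl hij | (simp [dot, eVec]; ring)

theorem cell_finite (x : Site) : (cell x).Finite := by
  have hcell : cell x = {x.1} ×ˢ Set.Ico (4 * x.2.1) (4 * x.2.1 + 4) ×ˢ
      Set.Ico (16 * x.2.2) (16 * x.2.2 + 16) := by
    ext y
    simp [cell, and_assoc]
  rw [hcell]
  exact (Set.finite_singleton _).prod ((Set.finite_Ico _ _).prod (Set.finite_Ico _ _))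

theorem add_mem_cell_or_mem_cell_add {x y : Site} (hy : y ∈ cell x) {i : Fin 3} {v : Site}
    (hv : IsAxisStep i v) : y + v ∈ cell x ∨ y + v ∈ cell (x + v) := by
  simp only [cell, Set.mem_ofPred_eq] at hy ⊢
  rcases hv with rfl | rfl <;> fin_cases i <;> simp [eVec] <;> omega

theorem cell_subset_brick {L : ℕ} {x : Site} (hx : x ∈ ProtoBrick L) : cell x ⊆ Brick L := by
  intro y hy
  simp only [ProtoBrick, Set.mem_ofPred_eq] at hx
  simp only [cell, Set.mem_ofPred_eq] at hy
  simp only [Brick, Set.mem_ofPred_eq]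
  omega

end Geometry

theorem cell_subset_of_modRule {E Cl : Set Site} (hE : ∀ y ∉ Cl, ModRule E y → y ∈ E)
    {x : Site} (hopen : ∀ y ∈ cell x, y ∉ Cl) (hx : ModRule {z | cell z ⊆ E} x) :
    cell x ⊆ E := by
  obtain ⟨i, j, hij, hi, hj⟩ := hx
  obtain ⟨v, hv, hxv⟩ := (modRule_clause_iff i _ x).mp hi
  obtain ⟨w, hw, hxw⟩ := (modRule_clause_iff j _ x).mp hj
  by_contra hsub
  obtain ⟨y, ⟨hy, hyE⟩, hmax⟩ := Set.exists_max_image (cell x \ E) (dot (v + w))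
    (cell_finite x).sdiff (Set.sdiff_nonempty.mpr hsub)
  have step_mem : ∀ k u, IsAxisStep k u → cell (x + u) ⊆ E →
      dot (v + w) (y + u) = dot (v + w) y + 1 → y + u ∈ E := by
    intro k u hu hxu hdot
    rcases add_mem_cell_or_mem_cell_add hy hu with hyu | hyu
    · by_contra hyuE
      have := hmax _ ⟨hyu, hyuE⟩
      omega
    · exact hxu hyu
  refine hyE (hE y (hopen y hy) ⟨i, j, hij, ?_, ?_⟩)
  · exact (modRule_clause_iff i E y).mpr
      ⟨v, hv, step_mem i v hv hxv (dot_add_axisStep hij hv hw y)⟩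
  · refine (modRule_clause_iff j E y).mpr ⟨w, hw, step_mem j w hw hxw ?_⟩
    rw [add_comm v w]
    exact dot_add_axisStep hij.symm hw hv y

theorem occSeq_subset_cells_eventuallyOcc {C O C' O' : Set Site} (hO : ∀ x ∈ O, cell x ⊆ O')
    (hC : ∀ x ∉ C, ∀ y ∈ cell x, y ∉ C') (t : ℕ) :
    occSeq C O t ⊆ {x | cell x ⊆ eventuallyOcc C' O'} := by
  induction t with
  | zero => exact fun x hx => (hO x hx).trans (occSeq_subset_eventuallyOcc 0)
  | succ t ih =>
    rintro x (hx | ⟨hxC, hrule⟩)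
    · exact ih hx
    · exact cell_subset_of_modRule (fun _ => mem_eventuallyOcc_of_modRule) (hC x hxC)
        (hrule.mono ih)

theorem cell_comparison_general (L : ℕ) (C O : Set Site) (x : Site)
    (hx : ∃ t : ℕ, x ∈ occSeq (AuxClosed L C) (AuxOcc L O) t) :
    ∀ y ∈ cell x, ∃ t : ℕ, y ∈ occSeq (C ∪ (Brick L)ᶜ) (O ∩ Brick L) t := by
  have hO : ∀ z ∈ AuxOcc L O, cell z ⊆ O ∩ Brick L :=
    fun z ⟨hzB, hzO⟩ y hy => ⟨hzO y hy, cell_subset_brick hzB hy⟩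
  have hC : ∀ z ∉ AuxClosed L C, ∀ y ∈ cell z, y ∉ C ∪ (Brick L)ᶜ := by
    intro z hz y hy hyC
    simp only [AuxClosed, Set.mem_ofPred_eq, not_or, not_not, not_exists, not_and] at hz
    rcases hyC with hyC | hyB
    · exact hz.2 y hy hyC
    · exact hyB (cell_subset_brick hz.1 hy)
  obtain ⟨t, hxt⟩ := hx
  intro y hy
  exact Set.mem_iUnion.mp (occSeq_subset_cells_eventuallyOcc hO hC t hxt hy)

/-- Cell comparison: if `x` becomes occupied in the modified bootstrap dynamics on the
proto-brick from the auxiliary configuration (all sites outside `B̂` closed), then every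
site of `cell(x)` becomes occupied in the dynamics on the brick from the original
configuration (all sites outside `B` closed). -/
theorem cell_comparison (L : ℕ) (hL : 1 ≤ L) (C O : Set Site)
    (hO : ∀ y ∈ O, y ∉ C) (x : Site)
    (hx : ∃ t : ℕ, x ∈ occSeq (AuxClosed L C) (AuxOcc L O) t) :
    ∀ y ∈ cell x, ∃ t : ℕ, y ∈ occSeq (C ∪ (Brick L)ᶜ) (O ∩ Brick L) t :=
  cell_comparison_general L C O x hx
end

section
/- If x, y ∈ ℤ³ each lie on an oriented path π in a fixed layer Λ_k whose steps are e₁ and -e₂ with no three consecutive equal steps, and z = y - (1,1,0) for some y ∈ π, then there exist integers a, b ∈ [0,3] such that z + a·e₁ ∈ π and z + b·e₂ ∈ π. -/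
/-- A bi-infinite oriented path in layer `Λ_k`: every site has third coordinate `k`,
every step is `e₁ = (1,0,0)` or `-e₂ = (0,-1,0)`, and no three consecutive steps are
equal. -/
def OrientedBiPath (f : ℤ → Site) (k : ℤ) : Prop :=
  (∀ t : ℤ, (f t).2.2 = k) ∧
  (∀ t : ℤ, f (t + 1) - f t = ((1 : ℤ), (0 : ℤ), (0 : ℤ)) ∨
            f (t + 1) - f t = ((0 : ℤ), (-1 : ℤ), (0 : ℤ))) ∧
  (∀ t : ℤ, ¬ (f (t + 1) - f t = f (t + 2) - f (t + 1) ∧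
               f (t + 2) - f (t + 1) = f (t + 3) - f (t + 2)))

def Site.swap₁₂ (x : Site) : Site := (x.2.1, x.1, x.2.2)

namespace OrientedBiPath

variable {f : ℤ → Site} {k : ℤ}

theorem reflect (hf : OrientedBiPath f k) :
    OrientedBiPath (fun t => (f (-t)).swap₁₂) k := by
  obtain ⟨hlayer, hstep, hno3⟩ := hf
  refine ⟨fun t => hlayer (-t), fun t => ?_, fun t => ?_⟩ <;> dsimp only
  · have h := hstep (-t - 1)
    rw [show -t - 1 + 1 = -t by ring] at h
    rw [show -(t + 1) = -t - 1 by ring]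
    simp only [Site.swap₁₂, Prod.ext_iff, Prod.fst_sub, Prod.snd_sub] at h ⊢
    omega
  · have h := hno3 (-t - 3)
    rw [show -t - 3 + 1 = -(t + 2) by ring, show -t - 3 + 2 = -(t + 1) by ring,
      show -t - 3 + 3 = -t by ring, show -t - 3 = -(t + 3) by ring] at h
    simp only [Site.swap₁₂, Prod.ext_iff, Prod.fst_sub, Prod.snd_sub] at h ⊢
    omega

theorem exists_descent_within_three (hf : OrientedBiPath f k) (t : ℤ) :
    ∃ j : ℤ, 1 ≤ j ∧ j ≤ 3 ∧ f (t + j) = f t + (j - 1, -1, 0) := by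
  obtain ⟨-, hstep, hno3⟩ := hf
  have h₁ := hstep t
  have h₂ := hstep (t + 1)
  have h₃ := hstep (t + 2)
  have h₀ := hno3 t
  rw [show t + 1 + 1 = t + 2 by ring] at h₂
  rw [show t + 2 + 1 = t + 3 by ring] at h₃
  simp only [Prod.ext_iff, Prod.fst_sub, Prod.snd_sub, Prod.fst_add, Prod.snd_add] at h₀ h₁ h₂ h₃ ⊢
  rcases h₁ with h₁ | h₁
  · rcases h₂ with h₂ | h₂
    · exact ⟨3, by norm_num, le_rfl, by omega⟩
    · exact ⟨2, by norm_num, by norm_num, by omega⟩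
  · exact ⟨1, le_rfl, by norm_num, by omega⟩

end OrientedBiPath

/-- For a site `y` on an oriented path in layer `Λ_k`, the translate `z = y - (1,1,0)`
satisfies: there are `a, b ∈ [0,3]` with `z + a·e₁` and `z + b·e₂` on the path. -/
theorem translate_close_to_path (f : ℤ → Site) (k : ℤ) (hf : OrientedBiPath f k)
    (t₀ : ℤ) (z : Site) (hz : z = f t₀ - ((1 : ℤ), (1 : ℤ), (0 : ℤ))) :
    ∃ a b : ℤ, 0 ≤ a ∧ a ≤ 3 ∧ 0 ≤ b ∧ b ≤ 3 ∧
      (∃ s : ℤ, f s = z + ((a, (0 : ℤ), (0 : ℤ)) : Site)) ∧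
      (∃ s : ℤ, f s = z + (((0 : ℤ), b, (0 : ℤ)) : Site)) := by
  obtain ⟨a, ha₁, ha₃, ha⟩ := hf.exists_descent_within_three t₀
  obtain ⟨b, hb₁, hb₃, hb⟩ := hf.reflect.exists_descent_within_three (-t₀)
  refine ⟨a, b, by omega, ha₃, by omega, hb₃, ⟨t₀ + a, ?_⟩, ⟨t₀ - b, ?_⟩⟩
  · rw [ha, hz]
    simp only [Prod.ext_iff, Prod.fst_add, Prod.snd_add, Prod.fst_sub, Prod.snd_sub]
    omega
  · rw [show -t₀ + b = -(t₀ - b) by ring, neg_neg, neg_neg] at hb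
    simp only [Site.swap₁₂, Prod.ext_iff, Prod.fst_add, Prod.snd_add] at hb
    simp only [hz, Prod.ext_iff, Prod.fst_add, Prod.snd_add, Prod.fst_sub, Prod.snd_sub]
    omega
end
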